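/- With R₀ the quaternionic projective space curvature tensor on (V, I, J, K) and {X, IX, Y, IY} orthonormal, one has R₀(X,IX,Y,IY) = (1 − e(X,Y))/2 where e(X,Y) = ⟨JX,Y⟩² + ⟨KX,Y⟩², and consequently the isotropic curvature satisfies R₀^iso(X,IX,Y,IY) = 4 e(X,Y). -/

import Mathlib

open scoped RealInnerProductSpace

/-- The curvature tensor `R₀` of quaternionic projective space as a `(0,4)`-tensor. -/
noncomputable def quatR0 {E : Type*} [NormedAddCommGroup E] [InnerProductSpace ℝ E]
    (I J K : E →ₗ[ℝ] E) (X Y Z W : E) : ℝ :=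
  (1 / 4) * (⟪X, Z⟫ * ⟪Y, W⟫ - ⟪Y, Z⟫ * ⟪X, W⟫
    + 2 * ⟪I X, Y⟫ * ⟪I Z, W⟫ + ⟪I X, Z⟫ * ⟪I Y, W⟫ - ⟪I Y, Z⟫ * ⟪I X, W⟫
    + 2 * ⟪J X, Y⟫ * ⟪J Z, W⟫ + ⟪J X, Z⟫ * ⟪J Y, W⟫ - ⟪J Y, Z⟫ * ⟪J X, W⟫
    + 2 * ⟪K X, Y⟫ * ⟪K Z, W⟫ + ⟪K X, Z⟫ * ⟪K Y, W⟫ - ⟪K Y, Z⟫ * ⟪K X, W⟫)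

/-- The isotropic-curvature expression of a `(0,4)`-tensor on a 4-frame. -/
noncomputable def isoCurv4 {E : Type*} (R : E → E → E → E → ℝ)
    (e₁ e₂ e₃ e₄ : E) : ℝ :=
  R e₁ e₃ e₁ e₃ + R e₁ e₄ e₁ e₄ + R e₂ e₃ e₂ e₃ + R e₂ e₄ e₂ e₄ - 2 * R e₁ e₂ e₃ e₄

/-! Orthogonality of `I` together with `I² = -1` makes `I, J, K` skew-adjoint. Expanding `R₀` and
moving every complex structure to one side of each inner product with the quaternion relations
gives closed formulas for the sectional curvature `R₀(X,Y,X,Y)` and for the holomorphic term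
`R₀(X,IX,Y,IY)`. The coupling `e(X,Y)` is unchanged when `X` or `Y` is replaced by its `I`-image,
so the four sectional curvatures in `R₀^iso(X,IX,Y,IY)` all equal `(1 + 3e)/4`, and subtracting
twice `R₀(X,IX,Y,IY) = (1 - e)/2` leaves `4e`. -/

section Quaternionic

variable {E : Type*} [NormedAddCommGroup E] [InnerProductSpace ℝ E]

/-- The paper's `e(x,y)`. -/
noncomputable def quatCoupling (J K : E →ₗ[ℝ] E) (x y : E) : ℝ :=
  ⟪J x, y⟫ ^ 2 + ⟪K x, y⟫ ^ 2

theorem inner_map_left_of_sq_eq_neg {A : E →ₗ[ℝ] E} (hA2 : ∀ x, A (A x) = -x)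
    (hAO : ∀ x y, ⟪A x, A y⟫ = ⟪x, y⟫) (x y : E) : ⟪A x, y⟫ = -⟪x, A y⟫ := by
  rw [← hAO x (A y), hA2, inner_neg_right, neg_neg]

theorem inner_map_self_eq_zero_of_skew {A : E →ₗ[ℝ] E} (hA : ∀ x y, ⟪A x, y⟫ = -⟪x, A y⟫)
    (x : E) : ⟪A x, x⟫ = 0 := by
  have h := hA x x
  rw [real_inner_comm (A x) x] at h
  linarith

theorem inner_map_right_of_skew {A : E →ₗ[ℝ] E} (hA : ∀ x y, ⟪A x, y⟫ = -⟪x, A y⟫)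
    (x y : E) : ⟪x, A y⟫ = -⟪A x, y⟫ := by
  rw [hA, neg_neg]

variable {I J K : E →ₗ[ℝ] E}

theorem quatCoupling_map_left (hJI : ∀ x, J (I x) = -K x) (hKI : ∀ x, K (I x) = J x)
    (x y : E) : quatCoupling J K (I x) y = quatCoupling J K x y := by
  simp only [quatCoupling, hJI, hKI, inner_neg_left]
  ring

theorem quatCoupling_map_right (hI : ∀ x y, ⟪I x, y⟫ = -⟪x, I y⟫)
    (hIJ : ∀ x, I (J x) = K x) (hIK : ∀ x, I (K x) = -J x) (x y : E) :
    quatCoupling J K x (I y) = quatCoupling J K x y := by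
  simp only [quatCoupling, inner_map_right_of_skew hI, hIJ, hIK, inner_neg_left]
  ring

theorem quatR0_sectional (hI : ∀ x y, ⟪I x, y⟫ = -⟪x, I y⟫)
    (hJ : ∀ x y, ⟪J x, y⟫ = -⟪x, J y⟫) (hK : ∀ x y, ⟪K x, y⟫ = -⟪x, K y⟫) (X Y : E) :
    quatR0 I J K X Y X Y =
      (‖X‖ ^ 2 * ‖Y‖ ^ 2 - ⟪X, Y⟫ ^ 2 + 3 * (⟪I X, Y⟫ ^ 2 + quatCoupling J K X Y)) / 4 := by
  have hYX : ∀ A : E →ₗ[ℝ] E, (∀ x y, ⟪A x, y⟫ = -⟪x, A y⟫) → ⟪A Y, X⟫ = -⟪A X, Y⟫ :=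
    fun A hA ↦ by rw [hA, real_inner_comm, hA, neg_neg]
  simp only [quatR0, quatCoupling, hYX I hI, hYX J hJ, hYX K hK,
    inner_map_self_eq_zero_of_skew hI, inner_map_self_eq_zero_of_skew hJ,
    inner_map_self_eq_zero_of_skew hK, real_inner_comm Y X, real_inner_self_eq_norm_sq]
  ring

theorem quatR0_holomorphic (hI2 : ∀ x, I (I x) = -x) (hI : ∀ x y, ⟪I x, y⟫ = -⟪x, I y⟫)
    (hJ : ∀ x y, ⟪J x, y⟫ = -⟪x, J y⟫) (hK : ∀ x y, ⟪K x, y⟫ = -⟪x, K y⟫)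
    (hIJ : ∀ x, I (J x) = K x) (hJI : ∀ x, J (I x) = -K x)
    (hKI : ∀ x, K (I x) = J x) (hIK : ∀ x, I (K x) = -J x) (X Y : E) :
    quatR0 I J K X (I X) Y (I Y) =
      (‖X‖ ^ 2 * ‖Y‖ ^ 2 + ⟪X, Y⟫ ^ 2 + ⟪I X, Y⟫ ^ 2 - quatCoupling J K X Y) / 2 := by
  simp only [quatR0, quatCoupling, inner_map_right_of_skew hI, hI2, hIJ, hJI, hKI, hIK, map_neg,
    inner_neg_left, neg_neg, inner_map_self_eq_zero_of_skew hJ, inner_map_self_eq_zero_of_skew hK,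
    real_inner_self_eq_norm_sq]
  ring

end Quaternionic

theorem quatR0_isoCurv_general
    {E : Type*} [NormedAddCommGroup E] [InnerProductSpace ℝ E]
    (I J K : E →ₗ[ℝ] E)
    (hI2 : ∀ x, I (I x) = -x) (hJ2 : ∀ x, J (J x) = -x) (hK2 : ∀ x, K (K x) = -x)
    (hIO : ∀ x y, ⟪I x, I y⟫ = ⟪x, y⟫) (hJO : ∀ x y, ⟪J x, J y⟫ = ⟪x, y⟫)
    (hKO : ∀ x y, ⟪K x, K y⟫ = ⟪x, y⟫)
    (hIJ : ∀ x, I (J x) = K x) (hJI : ∀ x, J (I x) = - K x)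
    (hKI : ∀ x, K (I x) = J x) (hIK : ∀ x, I (K x) = - J x)
    (X Y : E) (hX : ‖X‖ = 1) (hY : ‖Y‖ = 1)
    (hXY : ⟪X, Y⟫ = 0) (hXIY : ⟪X, I Y⟫ = 0) :
    quatR0 I J K X (I X) Y (I Y) = (1 - (⟪J X, Y⟫ ^ 2 + ⟪K X, Y⟫ ^ 2)) / 2 ∧
    isoCurv4 (quatR0 I J K) X (I X) Y (I Y) =
      4 * (⟪J X, Y⟫ ^ 2 + ⟪K X, Y⟫ ^ 2) := by
  show _ = (1 - quatCoupling J K X Y) / 2 ∧ _ = 4 * quatCoupling J K X Y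
  have hI := inner_map_left_of_sq_eq_neg hI2 hIO
  have hJ := inner_map_left_of_sq_eq_neg hJ2 hJO
  have hK := inner_map_left_of_sq_eq_neg hK2 hKO
  have hIXY : ⟪I X, Y⟫ = 0 := by rw [hI, hXIY, neg_zero]
  have hIX : ‖I X‖ = ‖X‖ := (I.isometryOfInner hIO).norm_map X
  have hIY : ‖I Y‖ = ‖Y‖ := (I.isometryOfInner hIO).norm_map Y
  have hR := quatR0_holomorphic hI2 hI hJ hK hIJ hJI hKI hIK X Y
  rw [hX, hY, hXY, hIXY] at hR
  refine ⟨by rw [hR]; ring, ?_⟩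
  rw [isoCurv4, hR]
  simp only [quatR0_sectional hI hJ hK, quatCoupling_map_left hJI hKI,
    quatCoupling_map_right hI hIJ hIK, hIX, hIY, hIO, hI2, inner_neg_left, hX, hY, hXY, hIXY,
    hXIY]
  ring

/-- For the quaternionic projective space curvature tensor `R₀` on
`(V, I, J, K)` and `{X, IX, Y, IY}` orthonormal, with
`e(X,Y) = ⟪JX,Y⟫² + ⟪KX,Y⟫²`, one has `R₀(X,IX,Y,IY) = (1 − e(X,Y))/2` and
`R₀^iso(X,IX,Y,IY) = 4 e(X,Y)`. -/
theorem quatR0_isoCurv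
    {E : Type*} [NormedAddCommGroup E] [InnerProductSpace ℝ E] [FiniteDimensional ℝ E]
    {n : ℕ} (hdim : Module.finrank ℝ E = 4 * n)
    (I J K : E →ₗ[ℝ] E)
    (hI2 : ∀ x, I (I x) = -x) (hJ2 : ∀ x, J (J x) = -x) (hK2 : ∀ x, K (K x) = -x)
    (hIO : ∀ x y, ⟪I x, I y⟫ = ⟪x, y⟫) (hJO : ∀ x y, ⟪J x, J y⟫ = ⟪x, y⟫)
    (hKO : ∀ x y, ⟪K x, K y⟫ = ⟪x, y⟫)
    (hIJ : ∀ x, I (J x) = K x) (hJI : ∀ x, J (I x) = - K x)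
    (hJK : ∀ x, J (K x) = I x) (hKJ : ∀ x, K (J x) = - I x)
    (hKI : ∀ x, K (I x) = J x) (hIK : ∀ x, I (K x) = - J x)
    (X Y : E) (hX : ‖X‖ = 1) (hY : ‖Y‖ = 1)
    (hXY : ⟪X, Y⟫ = 0) (hXIY : ⟪X, I Y⟫ = 0) :
    quatR0 I J K X (I X) Y (I Y) = (1 - (⟪J X, Y⟫ ^ 2 + ⟪K X, Y⟫ ^ 2)) / 2 ∧
    isoCurv4 (quatR0 I J K) X (I X) Y (I Y) =
      4 * (⟪J X, Y⟫ ^ 2 + ⟪K X, Y⟫ ^ 2) :=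
  quatR0_isoCurv_general I J K hI2 hJ2 hK2 hIO hJO hKO hIJ hJI hKI hIK X Y hX hY hXY hXIY
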